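/- arXiv:2203.01480 — 4 statements merged into one kernel-verified Lean document; each statement's English description precedes it below -/
import Mathlib

section
/- For any graph G = (V,E) with |E| ≥ 1 and any partition A of V, the modularity satisfies q(A) ≥ −1/2. -/
open Finset

/-- Volume of a vertex set: sum of degrees. -/
def graphVol {V : Type*} [Fintype V] (G : SimpleGraph V) [DecidableRel G.Adj]
    (A : Finset V) : ℕ := ∑ v ∈ A, G.degree v

/-- Number of ordered pairs of adjacent vertices both in `A` (equals `2·e(A)`). -/
def interiorPairs {V : Type*} [Fintype V] (G : SimpleGraph V) [DecidableRel G.Adj]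
    (A : Finset V) : ℕ := ((A ×ˢ A).filter fun p => G.Adj p.1 p.2).card

/-- Modularity of the partition of `V` given by the fibers of `c`.
Since `interiorPairs G A = 2 e(A)` and `graphVol G univ = 2|E|`, the first term is
`e(A_i)/|E|` and the second is `(vol(A_i)/vol(V))^2`. -/
def modularity {V : Type*} [Fintype V] [DecidableEq V] (G : SimpleGraph V) [DecidableRel G.Adj]
    {ι : Type*} [Fintype ι] [DecidableEq ι] (c : V → ι) : ℚ :=
  ∑ i : ι, ((interiorPairs G (univ.filter fun v => c v = i) : ℚ) / (graphVol G univ)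
    - ((graphVol G (univ.filter fun v => c v = i) : ℚ) / (graphVol G univ)) ^ 2)


section aux
variable {V : Type*} [Fintype V] [DecidableEq V] (G : SimpleGraph V) [DecidableRel G.Adj]

lemma graphVol_eq (A : Finset V) :
    graphVol G A = ∑ p ∈ (univ ×ˢ univ).filter (fun p : V × V => G.Adj p.1 p.2),
      (if p.1 ∈ A then 1 else 0) := by
  have h : ∀ u : V, G.degree u = ∑ w : V, if G.Adj u w then 1 else 0 := by
    intro u
    rw [← SimpleGraph.card_neighborFinset_eq_degree, Finset.card_eq_sum_ones]
    rw [show G.neighborFinset u = univ.filter (G.Adj u) by ext w; simp]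
    rw [Finset.sum_filter]
  calc ∑ v ∈ A, G.degree v
      = ∑ u : V, if u ∈ A then (∑ w : V, if G.Adj u w then 1 else 0) else 0 := by
        rw [Finset.sum_ite_mem, Finset.univ_inter]
        exact Finset.sum_congr rfl (fun u _ => h u)
    _ = ∑ u : V, ∑ w : V, if G.Adj u w then (if u ∈ A then 1 else 0) else 0 := by
        refine Finset.sum_congr rfl fun u _ => ?_
        split_ifs <;> simp
    _ = _ := by rw [Finset.sum_filter, Finset.sum_product]

lemma interiorPairs_eq (A : Finset V) :
    interiorPairs G A = ∑ p ∈ (univ ×ˢ univ).filter (fun p : V × V => G.Adj p.1 p.2),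
      (if p.1 ∈ A ∧ p.2 ∈ A then 1 else 0) := by
  rw [← Finset.sum_filter, Finset.filter_filter, interiorPairs]
  rw [show (A ×ˢ A).filter (fun p : V × V => G.Adj p.1 p.2)
      = (univ ×ˢ univ).filter (fun p : V × V => G.Adj p.1 p.2 ∧ (p.1 ∈ A ∧ p.2 ∈ A)) by
    ext p; simp [Finset.mem_product]; tauto]
  exact Finset.card_eq_sum_ones _

omit [DecidableEq V] in
lemma swap_sum (f : V → V → ℕ) :
    ∑ p ∈ (univ ×ˢ univ).filter (fun p : V × V => G.Adj p.1 p.2), f p.1 p.2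
    = ∑ p ∈ (univ ×ˢ univ).filter (fun p : V × V => G.Adj p.1 p.2), f p.2 p.1 := by
  apply Finset.sum_nbij' (fun p => Prod.swap p) (fun p => Prod.swap p) <;>
    simp [SimpleGraph.adj_comm]
end aux

/-- for any graph with at least one edge and any partition `A` of the
vertex set, `q(A) ≥ −1/2`. -/
theorem modularity_ge_neg_half {V : Type*} [Fintype V] [DecidableEq V]
    (G : SimpleGraph V) [DecidableRel G.Adj]
    (hE : 0 < G.edgeFinset.card)
    {ι : Type*} [Fintype ι] [DecidableEq ι] (c : V → ι) :
    -1/2 ≤ modularity G c := by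
  classical
  set S := (univ ×ˢ univ).filter (fun p : V × V => G.Adj p.1 p.2) with hS
  set n := graphVol G univ with hn
  set v : ι → ℕ := fun i => graphVol G (univ.filter fun x => c x = i) with hv
  set d : ι → ℕ := fun i => interiorPairs G (univ.filter fun x => c x = i) with hd
  have hnpos : 0 < n := by
    rw [hn, graphVol, SimpleGraph.sum_degrees_eq_twice_card_edges]
    omega
  have hncard : n = ∑ p ∈ S, 1 := by
    rw [hn, graphVol_eq]
    exact Finset.sum_congr rfl fun p _ => by simp
  have hsumv : ∑ i, v i = n := by
    simp only [hv, graphVol_eq]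
    rw [Finset.sum_comm, hncard]
    refine Finset.sum_congr rfl fun p _ => ?_
    simp
  have hsumd : ∑ i, d i = ∑ p ∈ S, (if c p.1 = c p.2 then 1 else 0) := by
    simp only [hd, interiorPairs_eq]
    rw [Finset.sum_comm]
    refine Finset.sum_congr rfl fun p _ => ?_
    simp only [Finset.mem_filter, Finset.mem_univ, true_and]
    have h0 : ∀ x : ι, (if c p.1 = x ∧ c p.2 = x then 1 else 0)
        = (if c p.1 = x then (if c p.2 = x then (1:ℕ) else 0) else 0) := by
      intro x; split_ifs <;> tauto
    rw [Finset.sum_congr rfl fun x _ => h0 x, Finset.sum_ite_eq]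
    simp only [Finset.mem_univ, if_true]
    split_ifs with h1 h2 h2 <;> first | rfl | (exfalso; first | exact h2 h1.symm | exact h1 h2.symm)
  have hV : Nonempty V := by
    by_contra h
    simp only [not_nonempty_iff] at h
    rw [hn, graphVol] at hnpos
    simp [Finset.univ_eq_empty] at hnpos
  have hι : Nonempty ι := ⟨c (Classical.arbitrary V)⟩
  obtain ⟨j, -, hj⟩ := Finset.exists_max_image (univ : Finset ι) v
    ⟨Classical.arbitrary ι, Finset.mem_univ _⟩
  have hv1 : v j = ∑ p ∈ S, (if c p.1 = j then 1 else 0) := by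
    show graphVol G (univ.filter fun x => c x = j) = _
    rw [graphVol_eq]
    exact Finset.sum_congr rfl fun p _ => by simp
  have hv2 : v j = ∑ p ∈ S, (if c p.2 = j then 1 else 0) := by
    rw [hv1, hS, swap_sum G (fun a b => if c a = j then 1 else 0)]
  have hd1 : d j = ∑ p ∈ S, (if c p.1 = j ∧ c p.2 = j then 1 else 0) := by
    show interiorPairs G (univ.filter fun x => c x = j) = _
    rw [interiorPairs_eq]
    exact Finset.sum_congr rfl fun p _ => by simp
  have key : 2 * v j + ∑ i, d i ≤ n + 2 * d j := by
    calc 2 * v j + ∑ i, d i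
        = ∑ p ∈ S, ((if c p.1 = j then 1 else 0) + (if c p.2 = j then 1 else 0)
            + (if c p.1 = c p.2 then 1 else 0)) := by
          rw [two_mul]
          nth_rewrite 2 [hv2]
          rw [hv1, hsumd, ← Finset.sum_add_distrib, ← Finset.sum_add_distrib]
      _ ≤ ∑ p ∈ S, (1 + 2 * (if c p.1 = j ∧ c p.2 = j then 1 else 0)) := by
          refine Finset.sum_le_sum fun p _ => ?_
          split_ifs <;> first | omega | tauto | simp_all
      _ = n + 2 * d j := by
          rw [Finset.sum_add_distrib, ← hncard, ← Finset.mul_sum, ← hd1]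
  have hsq : ∑ i, v i ^ 2 ≤ v j * n := by
    rw [← hsumv, Finset.mul_sum]
    exact Finset.sum_le_sum fun i _ => by
      have := hj i (Finset.mem_univ i); nlinarith
  have hN : (0:ℚ) < (n:ℚ) := by exact_mod_cast hnpos
  have hmod : modularity G c = ∑ i : ι, ((d i : ℚ)/(n:ℚ) - ((v i:ℚ)/(n:ℚ))^2) := rfl
  rw [hmod, Finset.sum_sub_distrib, ← Finset.sum_div]
  have hsqdiv : ∑ i : ι, ((v i:ℚ)/(n:ℚ))^2 = (∑ i : ι, (v i:ℚ)^2)/(n:ℚ)^2 := by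
    rw [Finset.sum_div]
    exact Finset.sum_congr rfl fun i _ => div_pow _ _ _
  rw [hsqdiv]
  have e1 : (∑ i : ι, (v i:ℚ)^2)/(n:ℚ)^2 ≤ (v j : ℚ) / n := by
    rw [div_le_div_iff₀ (by positivity) hN]
    have h1 : (∑ i : ι, (v i:ℚ)^2) ≤ (v j : ℚ) * n := by exact_mod_cast hsq
    nlinarith
  have h2 : 2 * (v j : ℚ) ≤ (n:ℚ) + 2 * (∑ i : ι, (d i : ℚ)) := by
    have hdj : d j ≤ ∑ i, d i := Finset.single_le_sum (fun i _ => Nat.zero_le _) (Finset.mem_univ j)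
    have h3 : 2 * v j ≤ n + 2 * ∑ i, d i := by omega
    exact_mod_cast h3
  have e2 : -1/2 ≤ (∑ i : ι, (d i : ℚ)) / n - (v j : ℚ) / n := by
    rw [div_sub_div_same, le_div_iff₀ hN]
    linarith
  linarith
end

section
/- Let G be a d-regular graph on n vertices with λ = max(|λ_2|, |λ_n|). Then the maximum modularity satisfies q*(G) ≤ λ/d. -/
/-
For a part `A` of the partition, `x = 1_A - (|A|/n)·1` is orthogonal to the constant vector, and in
a `d`-regular graph `xᵀ Adj x = 2e(A) - d|A|²/n` while `‖x‖² = |A| - |A|²/n`. So the contribution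
`(2e(A) - d|A|²/n)/(dn)` of `A` to the modularity is at most `λ|A|/(dn)`, and summing over the
parts gives `λ/d`.
-/

open Finset

open Matrix

theorem nonneg_of_forall_abs_dotProduct_mulVec_le {V : Type*} [Fintype V] [Nontrivial V]
    (M : Matrix V V ℝ) {lam : ℝ}
    (hlam : ∀ x : V → ℝ, ∑ v, x v = 0 → |x ⬝ᵥ M *ᵥ x| ≤ lam * ∑ v, x v ^ 2) : 0 ≤ lam := by
  classical
  obtain ⟨u, w, huw⟩ := exists_pair_ne V
  have hsum : ∑ v, (Pi.single u 1 - Pi.single w 1 : V → ℝ) v = 0 := by simp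
  have hsq : ∑ v, (Pi.single u 1 - Pi.single w 1 : V → ℝ) v ^ 2 = 2 := by
    rw [Fintype.sum_eq_add u w huw fun v hv => by simp [hv.1, hv.2]]
    simp [huw, huw.symm, one_add_one_eq_two]
  have h := (abs_nonneg _).trans (hlam _ hsum)
  rw [hsq] at h
  linarith

namespace SimpleGraph

variable {V : Type*} [Fintype V] {G : SimpleGraph V} [DecidableRel G.Adj] {d : ℕ}

theorem IsRegularOfDegree.nontrivial [Nonempty V] (hG : G.IsRegularOfDegree d) (hd : 0 < d) :
    Nontrivial V := by
  obtain ⟨v⟩ := ‹Nonempty V›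
  obtain ⟨w, hvw⟩ := (G.degree_pos_iff_exists_adj v).mp (hG v ▸ hd)
  exact nontrivial_of_ne v w hvw.ne

theorem IsRegularOfDegree.graphVol_eq (hG : G.IsRegularOfDegree d) (A : Finset V) :
    graphVol G A = d * #A := by
  simp [graphVol, hG _, mul_comm]

variable (G) in
theorem natCast_interiorPairs {α : Type*} [NonAssocSemiring α] (A : Finset V) :
    (interiorPairs G A : α) =
      (A : Set V).indicator 1 ⬝ᵥ G.adjMatrix α *ᵥ (A : Set V).indicator 1 := by
  classical
  rw [interiorPairs, card_filter, sum_product]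
  push_cast
  simp only [dotProduct, Set.indicator_apply, mem_coe, Pi.one_apply, ite_mul, one_mul, zero_mul,
    sum_ite_mem, univ_inter, adjMatrix_mulVec_apply]
  refine sum_congr rfl fun v _ => ?_
  rw [neighborFinset_eq_filter, inter_comm, inter_filter, inter_univ, sum_filter]

theorem IsRegularOfDegree.dotProduct_adjMatrix_mulVec_sub_const {α : Type*} [CommRing α]
    (hG : G.IsRegularOfDegree d) (x : V → α) (t : α) :
    (x - Function.const V t) ⬝ᵥ G.adjMatrix α *ᵥ (x - Function.const V t) =
      x ⬝ᵥ G.adjMatrix α *ᵥ x - 2 * t * d * ∑ v, x v + t ^ 2 * d * Fintype.card V := by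
  have hconst : G.adjMatrix α *ᵥ Function.const V t = Function.const V (d * t) :=
    funext fun _ => adjMatrix_mulVec_const_apply_of_regular hG
  have hsymm : Function.const V t ⬝ᵥ G.adjMatrix α *ᵥ x = x ⬝ᵥ Function.const V (d * t) := by
    rw [dotProduct_mulVec, ← mulVec_transpose, transpose_adjMatrix, hconst, dotProduct_comm]
  rw [mulVec_sub, dotProduct_sub, sub_dotProduct, sub_dotProduct, hsymm, hconst]
  simp only [dotProduct, adjMatrix_mulVec_apply, Function.const_apply, ← sum_mul, sum_const,
    card_univ, nsmul_eq_mul]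
  ring

theorem IsRegularOfDegree.interiorPairs_sub_le [Nonempty V] (hG : G.IsRegularOfDegree d)
    {lam : ℝ} (hlam : ∀ x : V → ℝ, ∑ v, x v = 0 → x ⬝ᵥ G.adjMatrix ℝ *ᵥ x ≤ lam * ∑ v, x v ^ 2)
    (A : Finset V) :
    (interiorPairs G A : ℝ) - d * #A ^ 2 / Fintype.card V ≤
      lam * (#A - #A ^ 2 / Fintype.card V) := by
  have hn : (Fintype.card V : ℝ) ≠ 0 := by positivity
  set y : V → ℝ := (A : Set V).indicator 1
  set t : ℝ := #A / Fintype.card V with ht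
  have hy : ∑ v, y v = #A := by simp [y, sum_indicator_subset _ (subset_univ A)]
  have hyy : ∀ v, y v ^ 2 = y v := fun v => by by_cases hv : v ∈ A <;> simp [y, hv]
  have hsum : ∑ v, (y - Function.const V t) v = 0 := by
    simp [sum_sub_distrib, hy, ht, mul_div_cancel₀ _ hn]
  have hquad : (y - Function.const V t) ⬝ᵥ G.adjMatrix ℝ *ᵥ (y - Function.const V t) =
      interiorPairs G A - d * #A ^ 2 / Fintype.card V := by
    rw [hG.dotProduct_adjMatrix_mulVec_sub_const, ← natCast_interiorPairs, hy, ht]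
    field_simp
    ring
  have hsq : ∑ v, (y - Function.const V t) v ^ 2 = #A - #A ^ 2 / Fintype.card V := by
    simp only [Pi.sub_apply, Function.const_apply, sub_sq, sum_add_distrib, sum_sub_distrib, hyy,
      ← sum_mul, ← mul_sum, hy, sum_const, card_univ, nsmul_eq_mul, ht]
    field_simp
    ring
  have h := hlam _ hsum
  rwa [hquad, hsq] at h

theorem IsRegularOfDegree.modularity_eq [Nonempty V] [DecidableEq V] (hG : G.IsRegularOfDegree d)
    (hd : 0 < d) {ι : Type*} [Fintype ι] [DecidableEq ι] (c : V → ι) :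
    ((modularity G c : ℚ) : ℝ) = ∑ i, ((interiorPairs G {v | c v = i} : ℝ) -
      d * #{v | c v = i} ^ 2 / Fintype.card V) / (d * Fintype.card V) := by
  have hn : (Fintype.card V : ℝ) ≠ 0 := by positivity
  have hd' : (d : ℝ) ≠ 0 := by positivity
  rw [modularity]
  push_cast
  refine sum_congr rfl fun i _ => ?_
  rw [hG.graphVol_eq, hG.graphVol_eq, card_univ]
  push_cast
  field_simp

end SimpleGraph

/-- `lam` bounds the adjacency quadratic form on the orthogonal complement of the constant
vector, so it dominates `max(|λ₂|, |λₙ|)`. -/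
theorem max_modularity_le {V : Type*} [Fintype V] [DecidableEq V] [Nonempty V]
    (G : SimpleGraph V) [DecidableRel G.Adj]
    (d : ℕ) (hd : 0 < d) (hreg : ∀ v, G.degree v = d)
    (lam : ℝ)
    (hlam : ∀ x : V → ℝ, (∑ v, x v) = 0 →
      |dotProduct x ((G.adjMatrix ℝ).mulVec x)| ≤ lam * ∑ v, x v ^ 2)
    {ι : Type*} [Fintype ι] [DecidableEq ι] (c : V → ι) :
    ((modularity G c : ℚ) : ℝ) ≤ lam / d := by
  have hG : G.IsRegularOfDegree d := hreg
  have : Nontrivial V := hG.nontrivial hd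
  have hlam0 : 0 ≤ lam := nonneg_of_forall_abs_dotProduct_mulVec_le _ hlam
  rw [hG.modularity_eq hd c]
  calc _ ≤ ∑ i, lam * #{v | c v = i} / (d * Fintype.card V) := by
        gcongr with i
        calc _ ≤ lam * (#{v | c v = i} - #{v | c v = i} ^ 2 / Fintype.card V) :=
              hG.interiorPairs_sub_le (fun x hx => (le_abs_self _).trans (hlam x hx)) _
          _ ≤ lam * #{v | c v = i} := by gcongr; exact sub_le_self _ (by positivity)
    _ = lam / d := by
        rw [← sum_div, ← mul_sum, ← Nat.cast_sum,
          ← card_eq_sum_card_fiberwise fun v _ => mem_univ (c v), card_univ]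
        field_simp
end

section
/- Let (c_1,...,c_r) be natural numbers with c = max_i c_i, let Z_1,...,Z_r be independent Bernoulli(p) random variables, S_j = Σ_{i≤j} c_i Z_i, μ_j = E[S_j], and μ = μ_r. Then for all u ≥ 0, P(max_{1≤j≤r}(S_j − μ_j) ≥ u) ≤ exp(−u²/(2c(μ + u/3))). -/
/-!
Write `X i = c i * (Z i - p)`, so that the event is `∃ j, u ≤ T j` for the partial sums
`T j = ∑ i ≤ j, X i`. Split it according to the first index `j` with `u ≤ T j`. That event is
determined by `X i` for `i ≤ j`, so it is independent of `∑ i > j, X i`, and every centred `X i`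
has moment generating function at least `1`. Hence `exp (t * T j)` can be replaced by
`exp (t * ∑ i, X i)` on it, which gives the maximal Chernoff bound
`exp (t * u) * P (∃ j, u ≤ T j) ≤ ∏ i, mgf (X i) t`. For Bernoulli variables,
`mgf (X i) t ≤ exp (p * (exp (t * c i) - 1 - t * c i))`, and Bernstein's estimate
`exp x - 1 - x ≤ x ^ 2 / (2 * (1 - x / 3))` for `0 ≤ x < 3` bounds the product by
`exp (t ^ 2 * cmax * μ / (2 * (1 - t * cmax / 3)))`. Finally take `t = u / (cmax * (μ + u / 2))`.
-/

open MeasureTheory ProbabilityTheory Finset Real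
open scoped Nat

lemma Nat.two_mul_three_pow_le_factorial (n : ℕ) : 2 * 3 ^ n ≤ (n + 2)! := by
  induction n with
  | zero => simp [Nat.factorial]
  | succ k ih =>
    rw [Nat.factorial_succ, pow_succ]
    nlinarith

lemma Real.exp_le_one_add_add_sq_div {x : ℝ} (hx : 0 ≤ x) (hx3 : x < 3) :
    exp x ≤ 1 + x + x ^ 2 / (2 * (1 - x / 3)) := by
  have hexp : HasSum (fun n => x ^ n / n !) (exp x) := by
    rw [Real.exp_eq_exp_ℝ]
    exact NormedSpace.expSeries_div_hasSum_exp x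
  have hgeom : HasSum (fun n => x ^ 2 / 2 * (x / 3) ^ n) (x ^ 2 / 2 * (1 - x / 3)⁻¹) :=
    (hasSum_geometric_of_lt_one (by positivity) (by linarith)).mul_left _
  have hterm (n : ℕ) : x ^ (n + 2) / (n + 2)! ≤ x ^ 2 / 2 * (x / 3) ^ n := by
    have hfact : (2 * 3 ^ n : ℝ) ≤ (n + 2)! := by
      exact_mod_cast n.two_mul_three_pow_le_factorial
    calc x ^ (n + 2) / (n + 2)! ≤ x ^ (n + 2) / (2 * 3 ^ n) := by gcongr
      _ = x ^ 2 / 2 * (x / 3) ^ n := by rw [div_pow]; ring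
  have htail := hasSum_le hterm ((hasSum_nat_add_iff' 2).2 hexp) hgeom
  norm_num [sum_range_succ] at htail
  rw [← div_eq_mul_inv, div_div] at htail
  linarith

lemma Real.exp_mul_sub_one_sub_le {t a b : ℝ} (ht : 0 ≤ t) (ha : 0 ≤ a) (hab : a ≤ b)
    (htb : t * b < 3) :
    exp (t * a) - 1 - t * a ≤ t ^ 2 * a * b / (2 * (1 - t * b / 3)) := by
  have hta : t * a ≤ t * b := mul_le_mul_of_nonneg_left hab ht
  have hb : 0 ≤ b := ha.trans hab
  calc exp (t * a) - 1 - t * a ≤ (t * a) ^ 2 / (2 * (1 - t * a / 3)) := by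
        linarith [exp_le_one_add_add_sq_div (mul_nonneg ht ha) (hta.trans_lt htb)]
    _ ≤ t ^ 2 * a * b / (2 * (1 - t * b / 3)) := by
        rw [mul_pow, sq a, ← mul_assoc]
        gcongr
        linarith

/-- The textbook choice `u / (c * (μ + u / 3))` has `t * c = 3` when `μ = 0`; with `u / 2` in
place of `u / 3` one keeps `t * c ≤ 2` and still reaches the bound, since
`(μ + u / 2) * (μ + u / 6) ≤ (μ + u / 3) ^ 2`. -/
lemma exists_bernstein_exponent {u c μ : ℝ} (hu : 0 ≤ u) (hc : 0 ≤ c) (hμ : 0 ≤ μ) :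
    ∃ t, 0 ≤ t ∧ t * c < 3 ∧
      -(t * u) + t ^ 2 * c * μ / (2 * (1 - t * c / 3)) ≤ -(u ^ 2) / (2 * c * (μ + u / 3)) := by
  rcases hu.eq_or_lt with rfl | hu
  · exact ⟨0, le_rfl, by simp, by simp⟩
  -- for `c = 0` the right-hand side is `-(u ^ 2) / 0 = 0`
  rcases hc.eq_or_lt with rfl | hc
  · exact ⟨0, le_rfl, by simp, by simp⟩
  refine ⟨u / (c * (μ + u / 2)), by positivity, ?_, ?_⟩
  · rw [div_mul_eq_mul_div, div_lt_iff₀ (by positivity)]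
    nlinarith
  have hden : 1 - u / (c * (μ + u / 2)) * c / 3 = (μ + u / 6) / (μ + u / 2) := by
    field_simp
    ring
  have hval : -(u / (c * (μ + u / 2)) * u) + (u / (c * (μ + u / 2))) ^ 2 * c * μ /
      (2 * (1 - u / (c * (μ + u / 2)) * c / 3))
      = -(u ^ 2 * (μ + u / 3) / (2 * c * (μ + u / 2) * (μ + u / 6))) := by
    rw [hden]
    field_simp
    ring
  rw [hval, neg_div, neg_le_neg_iff, div_le_div_iff₀ (by positivity) (by positivity)]
  have hsq : (μ + u / 2) * (μ + u / 6) ≤ (μ + u / 3) ^ 2 := by nlinarith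
  nlinarith [mul_le_mul_of_nonneg_left hsq (by positivity : 0 ≤ 2 * c * u ^ 2)]

lemma one_le_bernoulli_mgf {p : ℝ} (hp0 : 0 ≤ p) (hp1 : p ≤ 1) (a : ℝ) :
    1 ≤ p * exp (a * (1 - p)) + (1 - p) * exp (-(a * p)) := by
  have h1 := mul_le_mul_of_nonneg_left (add_one_le_exp (a * (1 - p))) hp0
  have h0 := mul_le_mul_of_nonneg_left (add_one_le_exp (-(a * p))) (sub_nonneg.2 hp1)
  linear_combination h1 + h0

lemma bernoulli_mgf_le (p a : ℝ) :
    p * exp (a * (1 - p)) + (1 - p) * exp (-(a * p)) ≤ exp (p * (exp a - 1 - a)) := by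
  calc p * exp (a * (1 - p)) + (1 - p) * exp (-(a * p))
      = (1 + p * (exp a - 1)) * exp (-(a * p)) := by
        rw [show a * (1 - p) = a + -(a * p) by ring, exp_add]
        ring
    _ ≤ exp (p * (exp a - 1)) * exp (-(a * p)) := by
        gcongr
        linarith [add_one_le_exp (p * (exp a - 1))]
    _ = exp (p * (exp a - 1 - a)) := by
        rw [← exp_add]
        ring_nf

lemma prod_bernoulli_mgf_le {ι : Type*} (s : Finset ι) {p t b : ℝ} {a : ι → ℝ}
    (hp0 : 0 ≤ p) (hp1 : p ≤ 1) (ht : 0 ≤ t) (ha : ∀ i ∈ s, 0 ≤ a i) (hab : ∀ i ∈ s, a i ≤ b)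
    (htb : t * b < 3) :
    ∏ i ∈ s, (p * exp (t * a i * (1 - p)) + (1 - p) * exp (-(t * a i * p)))
      ≤ exp (t ^ 2 * b * (p * ∑ i ∈ s, a i) / (2 * (1 - t * b / 3))) := by
  calc ∏ i ∈ s, (p * exp (t * a i * (1 - p)) + (1 - p) * exp (-(t * a i * p)))
      ≤ ∏ i ∈ s, exp (p * (exp (t * a i) - 1 - t * a i)) :=
        prod_le_prod (fun i _ => zero_le_one.trans (one_le_bernoulli_mgf hp0 hp1 _))
          fun i _ => bernoulli_mgf_le p _
    _ = exp (∑ i ∈ s, p * (exp (t * a i) - 1 - t * a i)) := (exp_sum _ _).symm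
    _ ≤ exp (∑ i ∈ s, p * (t ^ 2 * a i * b / (2 * (1 - t * b / 3)))) :=
        exp_le_exp.2 <| sum_le_sum fun i hi =>
          mul_le_mul_of_nonneg_left (exp_mul_sub_one_sub_le ht (ha i hi) (hab i hi) htb) hp0
    _ = exp (t ^ 2 * b * (p * ∑ i ∈ s, a i) / (2 * (1 - t * b / 3))) := by
        rw [mul_sum, mul_sum, sum_div]
        exact congrArg exp (sum_congr rfl fun i _ => by ring)

section Bernoulli

variable {Ω : Type*} [MeasurableSpace Ω] {P : Measure Ω} [IsProbabilityMeasure P]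
  {W : Ω → ℝ} {p : ℝ}

lemma ae_eq_one_or_eq_zero_of_bernoulli (hW : Measurable W) (hp0 : 0 ≤ p) (hp1 : p ≤ 1)
    (h1 : P {ω | W ω = 1} = ENNReal.ofReal p) (h0 : P {ω | W ω = 0} = ENNReal.ofReal (1 - p)) :
    ∀ᵐ ω ∂P, W ω = 1 ∨ W ω = 0 := by
  have hm (x : ℝ) : MeasurableSet {ω | W ω = x} := hW (measurableSet_singleton x)
  have hs : {ω | W ω = 1 ∨ W ω = 0} = {ω | W ω = 1} ∪ {ω | W ω = 0} := Set.ofPred_or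
  rw [ae_iff_measure_eq (hs ▸ (hm 1).union (hm 0)).nullMeasurableSet, hs, measure_union
    (Set.disjoint_left.2 fun ω h1 h0 => one_ne_zero (h1.symm.trans h0)) (hm 0),
    h1, h0, ← ENNReal.ofReal_add hp0 (sub_nonneg.2 hp1), add_sub_cancel, ENNReal.ofReal_one,
    measure_univ]

lemma integral_comp_of_bernoulli (hW : Measurable W) (hp0 : 0 ≤ p) (hp1 : p ≤ 1)
    (h1 : P {ω | W ω = 1} = ENNReal.ofReal p) (h0 : P {ω | W ω = 0} = ENNReal.ofReal (1 - p))
    (g : ℝ → ℝ) :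
    ∫ ω, g (W ω) ∂P = p * g 1 + (1 - p) * g 0 := by
  have hm (x : ℝ) : MeasurableSet {ω | W ω = x} := hW (measurableSet_singleton x)
  have hsplit : (fun ω => g (W ω)) =ᵐ[P]
      {ω | W ω = 1}.indicator (fun _ => g 1) + {ω | W ω = 0}.indicator (fun _ => g 0) := by
    filter_upwards [ae_eq_one_or_eq_zero_of_bernoulli hW hp0 hp1 h1 h0] with ω hω
    rcases hω with hω | hω <;> simp [Set.indicator, hω]
  rw [integral_congr_ae hsplit, integral_add' ((integrable_const _).indicator (hm 1))
    ((integrable_const _).indicator (hm 0)), integral_indicator_const _ (hm 1),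
    integral_indicator_const _ (hm 0), measureReal_def, measureReal_def, h1, h0,
    ENNReal.toReal_ofReal hp0, ENNReal.toReal_ofReal (sub_nonneg.2 hp1), smul_eq_mul,
    smul_eq_mul]

lemma mgf_mul_sub_of_bernoulli (hW : Measurable W) (hp0 : 0 ≤ p) (hp1 : p ≤ 1)
    (h1 : P {ω | W ω = 1} = ENNReal.ofReal p) (h0 : P {ω | W ω = 0} = ENNReal.ofReal (1 - p))
    (a t : ℝ) :
    mgf (fun ω => a * (W ω - p)) P t
      = p * exp (t * a * (1 - p)) + (1 - p) * exp (-(t * a * p)) := by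
  rw [mgf, integral_comp_of_bernoulli hW hp0 hp1 h1 h0 fun x => exp (t * (a * (x - p)))]
  ring_nf

end Bernoulli

section FirstPassage

variable {Ω ι : Type*} [LinearOrder ι]

def firstPassage (T : ι → Ω → ℝ) (u : ℝ) (j : ι) : Set Ω :=
  {ω | u ≤ T j ω ∧ ∀ k < j, T k ω < u}

lemma iUnion_firstPassage [WellFoundedLT ι] (T : ι → Ω → ℝ) (u : ℝ) :
    ⋃ j, firstPassage T u j = {ω | ∃ j, u ≤ T j ω} := by
  ext ω
  simp only [Set.mem_iUnion, firstPassage]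
  refine ⟨fun ⟨j, hj, _⟩ => ⟨j, hj⟩, fun h => ?_⟩
  obtain ⟨j, hj, hmin⟩ := wellFounded_lt.has_min {j | u ≤ T j ω} h
  exact ⟨j, hj, fun k hk => lt_of_not_ge fun hk' => hmin k hk' hk⟩

lemma pairwise_disjoint_firstPassage (T : ι → Ω → ℝ) (u : ℝ) :
    Pairwise (Function.onFun Disjoint (firstPassage T u)) := by
  intro j k hjk
  rw [Function.onFun, Set.disjoint_left]
  rintro ω ⟨hj, hj'⟩ ⟨hk, hk'⟩
  rcases hjk.lt_or_gt with h | h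
  · exact (hk' j h).not_ge hj
  · exact (hj' k h).not_ge hk

lemma measurableSet_firstPassage [Countable ι] {m : MeasurableSpace Ω} {T : ι → Ω → ℝ}
    {j : ι} (hT : ∀ k ≤ j, Measurable (T k)) (u : ℝ) :
    MeasurableSet (firstPassage T u j) := by
  have : firstPassage T u j = {ω | u ≤ T j ω} ∩ ⋂ k ∈ {k | k < j}, {ω | T k ω < u} := by
    ext ω
    simp [firstPassage]
  rw [this]
  exact (measurableSet_le measurable_const (hT j le_rfl)).inter
    (.biInter (Set.to_countable _) fun k hk => measurableSet_lt (hT k hk.le) measurable_const)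

end FirstPassage

section MaximalInequality

variable {Ω ι : Type*} [MeasurableSpace Ω] {P : Measure Ω} {X : ι → Ω → ℝ}

lemma indepFun_of_measurable_iSup (hX : ∀ i, Measurable (X i)) (hindep : iIndepFun X P)
    {S T : Set ι} (hST : Disjoint S T) {F G : Ω → ℝ}
    (hF : Measurable[⨆ i ∈ S, MeasurableSpace.comap (X i) inferInstance] F)
    (hG : Measurable[⨆ i ∈ T, MeasurableSpace.comap (X i) inferInstance] G) :
    IndepFun F G P := by
  rw [IndepFun_iff_Indep]
  exact indep_of_indep_of_le_right (indep_of_indep_of_le_left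
    (indep_iSup_of_disjoint (fun i => (hX i).comap_le) hindep.iIndep hST) hF.comap_le)
    hG.comap_le

omit [MeasurableSpace Ω] in
lemma measurable_sum_iSup {S : Set ι} {s : Finset ι} (hs : ↑s ⊆ S) :
    Measurable[⨆ i ∈ S, MeasurableSpace.comap (X i) inferInstance]
      (fun ω => ∑ i ∈ s, X i ω) :=
  Finset.measurable_sum _ fun i hi =>
    (comap_measurable (X i)).mono (le_iSup₂_of_le i (hs hi) le_rfl) le_rfl

variable [IsProbabilityMeasure P] {t : ℝ}

lemma integrable_exp_mul_sum_of_one_le_mgf (hX : ∀ i, Measurable (X i))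
    (hindep : iIndepFun X P) (hmgf : ∀ i, 1 ≤ mgf (X i) P t) (s : Finset ι) :
    Integrable (fun ω => exp (t * ∑ i ∈ s, X i ω)) P := by
  simpa using hindep.integrable_exp_mul_sum hX fun i _ => mgf_pos_iff.1 (one_pos.trans_le (hmgf i))

variable [Fintype ι] [LinearOrder ι]

lemma setIntegral_exp_mul_partialSum_le (hX : ∀ i, Measurable (X i)) (hindep : iIndepFun X P)
    (hmgf : ∀ i, 1 ≤ mgf (X i) P t) (j : ι) {A : Set Ω}
    (hA : MeasurableSet[⨆ i ∈ Set.Iic j, MeasurableSpace.comap (X i) inferInstance] A) :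
    ∫ ω in A, exp (t * ∑ i ∈ univ.filter (· ≤ j), X i ω) ∂P
      ≤ ∫ ω in A, exp (t * ∑ i, X i ω) ∂P := by
  have hA' : MeasurableSet A := iSup₂_le (fun i _ => (hX i).comap_le) A hA
  set F := A.indicator fun ω => exp (t * ∑ i ∈ univ.filter (· ≤ j), X i ω)
  set G := fun ω => exp (t * ∑ i ∈ univ.filter (fun i => ¬ i ≤ j), X i ω)
  have hFG : A.indicator (fun ω => exp (t * ∑ i, X i ω)) = F * G := by
    ext ω
    rw [Pi.mul_apply, ← Set.indicator_mul_left]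
    simp only [G, ← exp_add, ← mul_add, sum_filter_add_sum_filter_not]
  have hindepFG : IndepFun F G P := by
    refine indepFun_of_measurable_iSup hX hindep (disjoint_compl_right (a := Set.Iic j)) ?_ ?_
    · exact (measurable_exp.comp
        ((measurable_sum_iSup fun i => by simp).const_mul t)).indicator hA
    · exact measurable_exp.comp ((measurable_sum_iSup fun i => by simp).const_mul t)
  have hint := integrable_exp_mul_sum_of_one_le_mgf hX hindep hmgf
  have hG : 1 ≤ ∫ ω, G ω ∂P := by
    calc (1 : ℝ) ≤ ∏ i ∈ univ.filter (fun i => ¬ i ≤ j), mgf (X i) P t :=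
          Finset.one_le_prod fun i _ => hmgf i
      _ = ∫ ω, G ω ∂P := by
          rw [← hindep.mgf_sum hX]
          simp [mgf, G]
  calc ∫ ω in A, exp (t * ∑ i ∈ univ.filter (· ≤ j), X i ω) ∂P
      = ∫ ω, F ω ∂P := (integral_indicator hA').symm
    _ ≤ (∫ ω, F ω ∂P) * ∫ ω, G ω ∂P :=
        le_mul_of_one_le_right
          (integral_nonneg fun ω => Set.indicator_nonneg (fun _ _ => (exp_pos _).le) ω) hG
    _ = ∫ ω, (F * G) ω ∂P :=
        (hindepFG.integral_mul_eq_mul_integral ((hint _).indicator hA').aestronglyMeasurable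
          (hint _).aestronglyMeasurable).symm
    _ = ∫ ω in A, exp (t * ∑ i, X i ω) ∂P := by rw [← hFG, integral_indicator hA']

theorem measureReal_exists_le_partialSum_le (hX : ∀ i, Measurable (X i))
    (hindep : iIndepFun X P) (ht : 0 ≤ t) (hmgf : ∀ i, 1 ≤ mgf (X i) P t) (u : ℝ) :
    P.real {ω | ∃ j, u ≤ ∑ i ∈ univ.filter (· ≤ j), X i ω}
      ≤ exp (-(t * u)) * ∏ i, mgf (X i) P t := by
  set T : ι → Ω → ℝ := fun j ω => ∑ i ∈ univ.filter (· ≤ j), X i ω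
  set A := firstPassage T u
  have hA (j : ι) :
      MeasurableSet[⨆ i ∈ Set.Iic j, MeasurableSpace.comap (X i) inferInstance] (A j) :=
    measurableSet_firstPassage (fun k hk => measurable_sum_iSup fun i hi =>
      le_trans (by simpa using hi) hk) u
  have hA' (j : ι) : MeasurableSet (A j) := iSup₂_le (fun i _ => (hX i).comap_le) _ (hA j)
  have hint := integrable_exp_mul_sum_of_one_le_mgf hX hindep hmgf
  rw [exp_neg, ← div_eq_inv_mul, le_div_iff₀' (exp_pos _)]
  calc exp (t * u) * P.real {ω | ∃ j, u ≤ T j ω}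
      = ∑ j, exp (t * u) * P.real (A j) := by
        rw [← iUnion_firstPassage, measureReal_iUnion_fintype
          (pairwise_disjoint_firstPassage T u) hA', mul_sum]
    _ ≤ ∑ j, ∫ ω in A j, exp (t * T j ω) ∂P := sum_le_sum fun j _ =>
        setIntegral_ge_of_const_le_real (hA' j) (measure_ne_top _ _)
          (fun ω hω => exp_le_exp.2 (mul_le_mul_of_nonneg_left hω.1 ht)) (hint _).integrableOn
    _ ≤ ∑ j, ∫ ω in A j, exp (t * ∑ i, X i ω) ∂P := sum_le_sum fun j _ =>
        setIntegral_exp_mul_partialSum_le hX hindep hmgf j (hA j)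
    _ = ∫ ω in ⋃ j, A j, exp (t * ∑ i, X i ω) ∂P :=
        (integral_iUnion_fintype hA' (pairwise_disjoint_firstPassage T u)
          fun j => (hint _).integrableOn).symm
    _ ≤ ∫ ω, exp (t * ∑ i, X i ω) ∂P :=
        setIntegral_le_integral (hint _) (.of_forall fun ω => (exp_pos _).le)
    _ = ∏ i, mgf (X i) P t := by
        rw [← hindep.mgf_sum hX]
        simp [mgf]

end MaximalInequality

theorem weighted_chernoff_upper_general {Ω : Type*} [MeasurableSpace Ω]
    (P : Measure Ω) [IsProbabilityMeasure P]
    (r : ℕ) (c : Fin r → ℕ)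
    (cmax : ℕ) (hcmax : cmax = Finset.univ.sup c)
    (p : ℝ) (hp0 : 0 ≤ p) (hp1 : p ≤ 1)
    (Z : Fin r → Ω → ℝ) (hmeas : ∀ i, Measurable (Z i))
    (hindep : ProbabilityTheory.iIndepFun Z P)
    (hbern : ∀ i, P {ω | Z i ω = 1} = ENNReal.ofReal p ∧
                  P {ω | Z i ω = 0} = ENNReal.ofReal (1 - p))
    (u : ℝ) (hu : 0 ≤ u) :
    P {ω | ∃ j : Fin r,
        u ≤ (∑ i ∈ Finset.univ.filter (· ≤ j), (c i : ℝ) * Z i ω)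
              - p * (∑ i ∈ Finset.univ.filter (· ≤ j), (c i : ℝ))}
      ≤ ENNReal.ofReal
          (Real.exp (-(u ^ 2) /
            (2 * cmax * (p * (∑ i : Fin r, (c i : ℝ)) + u / 3)))) := by
  set X : Fin r → Ω → ℝ := fun i ω => (c i : ℝ) * (Z i ω - p)
  have hX (i : Fin r) : Measurable (X i) := ((hmeas i).sub_const p).const_mul _
  have hindepX : iIndepFun X P := hindep.comp _ fun i => (measurable_id.sub_const p).const_mul _
  have hc (i : Fin r) : (c i : ℝ) ≤ cmax := by exact_mod_cast hcmax ▸ le_sup (mem_univ i)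
  obtain ⟨t, ht0, htc, hexponent⟩ :=
    exists_bernstein_exponent hu cmax.cast_nonneg (by positivity : 0 ≤ p * ∑ i, (c i : ℝ))
  have hmgf (i : Fin r) :
      mgf (X i) P t = p * exp (t * c i * (1 - p)) + (1 - p) * exp (-(t * c i * p)) :=
    mgf_mul_sub_of_bernoulli (hmeas i) hp0 hp1 (hbern i).1 (hbern i).2 _ _
  have hevent : {ω | ∃ j : Fin r, u ≤ (∑ i ∈ univ.filter (· ≤ j), (c i : ℝ) * Z i ω)
      - p * (∑ i ∈ univ.filter (· ≤ j), (c i : ℝ))}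
      = {ω | ∃ j, u ≤ ∑ i ∈ univ.filter (· ≤ j), X i ω} := by
    simp only [X, mul_sub, sum_sub_distrib, sum_mul, mul_comm p]
  rw [hevent, ← ofReal_measureReal]
  refine ENNReal.ofReal_le_ofReal ?_
  calc P.real {ω | ∃ j, u ≤ ∑ i ∈ univ.filter (· ≤ j), X i ω}
      ≤ exp (-(t * u)) * ∏ i, mgf (X i) P t := measureReal_exists_le_partialSum_le hX hindepX
        ht0 (fun i => hmgf i ▸ one_le_bernoulli_mgf hp0 hp1 _) u
    _ ≤ exp (-(t * u)) *
          exp (t ^ 2 * cmax * (p * ∑ i, (c i : ℝ)) / (2 * (1 - t * cmax / 3))) := by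
        simp only [hmgf]
        gcongr
        exact prod_bernoulli_mgf_le _ hp0 hp1 ht0 (fun i _ => (c i).cast_nonneg)
          (fun i _ => hc i) htc
    _ ≤ _ := by
        rw [← exp_add]
        exact exp_le_exp.2 hexponent

/-- weighted Chernoff maximal upper-tail inequality: with `c₁,…,c_r` positive
integers of maximum `cmax`, `Z₁,…,Z_r` independent Bernoulli(`p`), `S_j = Σ_{i≤j} c_i Z_i`,
`μ_j = p Σ_{i≤j} c_i` and `μ = μ_r`, for all `u ≥ 0`,
`P(max_j (S_j − μ_j) ≥ u) ≤ exp(−u²/(2 cmax (μ + u/3)))`. -/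
theorem weighted_chernoff_upper {Ω : Type*} [MeasurableSpace Ω]
    (P : Measure Ω) [IsProbabilityMeasure P]
    (r : ℕ) (hr : 0 < r) (c : Fin r → ℕ) (hc : ∀ i, 0 < c i)
    (cmax : ℕ) (hcmax : cmax = Finset.univ.sup c)
    (p : ℝ) (hp0 : 0 ≤ p) (hp1 : p ≤ 1)
    (Z : Fin r → Ω → ℝ) (hmeas : ∀ i, Measurable (Z i))
    (hindep : ProbabilityTheory.iIndepFun Z P)
    (hbern : ∀ i, P {ω | Z i ω = 1} = ENNReal.ofReal p ∧
                  P {ω | Z i ω = 0} = ENNReal.ofReal (1 - p))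
    (u : ℝ) (hu : 0 ≤ u) :
    P {ω | ∃ j : Fin r,
        u ≤ (∑ i ∈ Finset.univ.filter (· ≤ j), (c i : ℝ) * Z i ω)
              - p * (∑ i ∈ Finset.univ.filter (· ≤ j), (c i : ℝ))}
      ≤ ENNReal.ofReal
          (Real.exp (-(u ^ 2) /
            (2 * cmax * (p * (∑ i : Fin r, (c i : ℝ)) + u / 3)))) :=
  weighted_chernoff_upper_general P r c cmax hcmax p hp0 hp1 Z hmeas hindep hbern u hu
end

section
/- Suppose G = (V,E) is a connected graph on n vertices with maximum degree Δ and volume vol(V) = 2|E|. Then there exists a partition C of V such that q(C) ≥ 2n/vol(V) − 3√(Δ/vol(V)) − Δ/vol(V). In particular, q*(G) ≥ 2n/vol(V) − 3√(Δ/vol(V)) − Δ/vol(V). -/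
/-!
Cut `G` into connected pieces of volume at most `Δ + (Δ - 1) ℓ`, where `ℓ = √(vol / Δ)`,
all but one of them of volume at least `ℓ`. A connected piece `B` spans at least `|B| - 1`
edges, so with `k ≤ vol / ℓ + 1` pieces the edge term is at least `(2n - 2k) / vol`, while the
degree tax `∑ (vol B / vol)²` is at most `max vol B / vol`; since `Δ ℓ / vol = √(Δ / vol)`,
this gives the bound once `ℓ ≥ 2`. Pieces are split off one at a time: among the pieces of
volume `≥ ℓ` that leave a connected remainder, one of least volume has a vertex `v` next to the
remainder, and the components left after deleting `v` are lighter than `ℓ` and hang on at most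
`Δ - 1` neighbours of `v`. When `vol < 4Δ`, the partition with a single part already gives
the bound.
-/

open Finset

namespace SimpleGraph

variable {V : Type*} {G : SimpleGraph V} {S T A : Finset V} {v x y z : V}

def ReachableIn (G : SimpleGraph V) (S : Finset V) (x y : V) : Prop :=
  ∃ p : G.Walk x y, ∀ z ∈ p.support, z ∈ S

/-- `G.ConnectedIn S` says that `G.induce S` is preconnected, phrased through walks of `G`
to stay inside `V`. -/
def ConnectedIn (G : SimpleGraph V) (S : Finset V) : Prop :=
  ∀ ⦃x⦄, x ∈ S → ∀ ⦃y⦄, y ∈ S → G.ReachableIn S x y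

namespace ReachableIn

theorem refl (hx : x ∈ S) : G.ReachableIn S x x :=
  ⟨.nil, by simpa using hx⟩

theorem mem_right (h : G.ReachableIn S x y) : y ∈ S :=
  h.elim fun p hp => hp y p.end_mem_support

theorem symm (h : G.ReachableIn S x y) : G.ReachableIn S y x :=
  h.elim fun p hp => ⟨p.reverse, fun z hz => hp z (by simpa using hz)⟩

theorem trans (h : G.ReachableIn S x y) (h' : G.ReachableIn S y z) : G.ReachableIn S x z := by
  obtain ⟨p, hp⟩ := h
  obtain ⟨q, hq⟩ := h'
  refine ⟨p.append q, fun u hu => ?_⟩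
  rcases Walk.mem_support_append_iff p q |>.mp hu with hu | hu
  exacts [hp u hu, hq u hu]

theorem mono (hST : S ⊆ T) (h : G.ReachableIn S x y) : G.ReachableIn T x y :=
  h.elim fun p hp => ⟨p, fun z hz => hST (hp z hz)⟩

end ReachableIn

theorem Adj.reachableIn (h : G.Adj x y) (hx : x ∈ S) (hy : y ∈ S) : G.ReachableIn S x y :=
  ⟨.cons h .nil, by simp [hx, hy]⟩

theorem connectedIn_singleton (x : V) : G.ConnectedIn {x} := by
  intro y hy z hz
  rw [mem_singleton] at hy hz
  subst hy hz
  exact .refl (mem_singleton_self _)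

theorem connectedIn_of_forall_reachableIn (h : ∀ y ∈ S, G.ReachableIn S y x) :
    G.ConnectedIn S :=
  fun y hy z hz => (h y hy).trans (h z hz).symm

theorem Connected.connectedIn_univ [Fintype V] (h : G.Connected) : G.ConnectedIn univ :=
  fun x _ y _ => (h.preconnected x y).elim fun p => ⟨p, fun z _ => mem_univ z⟩

open Classical in
noncomputable def componentIn (G : SimpleGraph V) (T : Finset V) (x : V) : Finset V :=
  T.filter (G.ReachableIn T x)

theorem mem_componentIn : y ∈ G.componentIn T x ↔ G.ReachableIn T x y := by
  classical
  simpa [componentIn] using fun h : G.ReachableIn T x y => h.mem_right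

theorem componentIn_subset : G.componentIn T x ⊆ T :=
  fun _ hy => (mem_componentIn.mp hy).mem_right

theorem mem_componentIn_self (hx : x ∈ T) : x ∈ G.componentIn T x :=
  mem_componentIn.mpr (.refl hx)

theorem componentIn_eq_of_mem (h : y ∈ G.componentIn T x) :
    G.componentIn T y = G.componentIn T x := by
  ext z
  simp only [mem_componentIn]
  exact ⟨(mem_componentIn.mp h).trans, (mem_componentIn.mp h).symm.trans⟩

variable [DecidableEq V]

theorem ConnectedIn.union_of_adj {B : Finset V} (hA : G.ConnectedIn A) (hB : G.ConnectedIn B)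
    (hx : x ∈ A) (hy : y ∈ B) (hxy : G.Adj x y) : G.ConnectedIn (A ∪ B) := by
  refine connectedIn_of_forall_reachableIn (x := x) fun z hz => ?_
  rcases mem_union.mp hz with hz | hz
  · exact (hA hz hx).mono subset_union_left
  · exact ((hB hz hy).mono subset_union_right).trans
      (hxy.symm.reachableIn (mem_union_right _ hy) (mem_union_left _ hx))

theorem ConnectedIn.exists_adj_sdiff (hS : G.ConnectedIn S) (hAS : A ⊆ S) (hx : x ∈ A)
    (hy : y ∈ S \ A) : ∃ a ∈ A, ∃ b ∈ S \ A, G.Adj a b := by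
  rw [mem_sdiff] at hy
  obtain ⟨p, hp⟩ := hS (hAS hx) hy.1
  obtain ⟨d, hd, hdA, hdA'⟩ := p.exists_boundary_dart A hx hy.2
  exact ⟨d.fst, hdA, d.snd,
    mem_sdiff.mpr ⟨hp _ (p.dart_snd_mem_support_of_mem_darts hd), hdA'⟩, d.adj⟩

theorem ConnectedIn.exists_connectedIn_erase (hS : G.ConnectedIn S) (hcard : 1 < #S) :
    ∃ v ∈ S, G.ConnectedIn (S.erase v) := by
  classical
  -- a largest connected proper subset `A` misses exactly one vertex
  obtain ⟨x, hx⟩ := card_pos.mp (zero_lt_one.trans hcard)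
  have hxF : {x} ∈ S.powerset.filter (fun A => G.ConnectedIn A ∧ A ≠ S) :=
    mem_filter.mpr ⟨by simpa using hx, connectedIn_singleton x, by rintro rfl; simp at hcard⟩
  obtain ⟨A, hAF, hAmax⟩ := exists_max_image _ card ⟨_, hxF⟩
  simp only [mem_filter, mem_powerset] at hAF
  obtain ⟨hAS, hA, hAS'⟩ := hAF
  obtain ⟨y, hy⟩ : (S \ A).Nonempty := sdiff_nonempty.mpr fun h => hAS' (hAS.antisymm h)
  obtain ⟨z, hz⟩ : A.Nonempty := by
    rcases A.eq_empty_or_nonempty with rfl | h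
    · simpa using hAmax _ hxF
    · exact h
  obtain ⟨a, ha, b, hb, hab⟩ := hS.exists_adj_sdiff hAS hz hy
  rw [mem_sdiff] at hb
  have hbA : insert b A = S := by
    by_contra hne
    have hmem : insert b A ∈ S.powerset.filter (fun A => G.ConnectedIn A ∧ A ≠ S) := by
      rw [insert_eq, union_comm]
      refine mem_filter.mpr ⟨mem_powerset.mpr (union_subset hAS (by simpa using hb.1)),
        hA.union_of_adj (connectedIn_singleton b) ha (mem_singleton_self b) hab, ?_⟩
      rwa [union_comm, ← insert_eq]
    simpa [card_insert_of_notMem hb.2] using hAmax _ hmem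
  exact ⟨b, hb.1, by rwa [← hbA, erase_insert hb.2]⟩

theorem ReachableIn.componentIn (h : G.ReachableIn T x y) :
    G.ReachableIn (G.componentIn T x) x y := by
  obtain ⟨p, hp⟩ := h
  exact ⟨p, fun z hz => mem_componentIn.mpr
    ⟨p.takeUntil z hz, fun w hw => hp w (p.support_takeUntil_subset_support hz hw)⟩⟩

theorem connectedIn_componentIn : G.ConnectedIn (G.componentIn T x) :=
  connectedIn_of_forall_reachableIn (x := x) fun _ hy =>
    (mem_componentIn.mp hy).componentIn.symm

theorem ConnectedIn.exists_adj_of_componentIn_erase (hA : G.ConnectedIn A) (hv : v ∈ A)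
    (hx : x ∈ A.erase v) : ∃ u ∈ G.componentIn (A.erase v) x, G.Adj u v := by
  obtain ⟨p, hp⟩ := hA (mem_of_mem_erase hx) hv
  have hvC : v ∉ G.componentIn (A.erase v) x := fun h => by
    simpa using componentIn_subset h
  obtain ⟨d, hd, hdC, hdC'⟩ := p.exists_boundary_dart _ (mem_componentIn_self hx) hvC
  refine ⟨d.fst, hdC, ?_⟩
  by_contra hne
  have hsnd : d.snd ∈ A.erase v :=
    mem_erase.mpr ⟨fun h => hne (h ▸ d.adj), hp _ (p.dart_snd_mem_support_of_mem_darts hd)⟩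
  exact hdC' (mem_componentIn.mpr
    ((mem_componentIn.mp hdC).trans (d.adj.reachableIn (componentIn_subset hdC) hsnd)))

theorem ConnectedIn.connectedIn_sdiff_componentIn_erase (hA : G.ConnectedIn A) (hv : v ∈ A) :
    G.ConnectedIn (A \ G.componentIn (A.erase v) x) := by
  have hvA : v ∈ A \ G.componentIn (A.erase v) x :=
    mem_sdiff.mpr ⟨hv, fun h => by simpa using componentIn_subset h⟩
  refine connectedIn_of_forall_reachableIn (x := v) fun y hy => ?_
  rcases eq_or_ne y v with rfl | hyv
  · exact .refl hvA
  obtain ⟨hyA, hyC⟩ := mem_sdiff.mp hy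
  have hyT : y ∈ A.erase v := mem_erase.mpr ⟨hyv, hyA⟩
  obtain ⟨u, hu, huv⟩ := hA.exists_adj_of_componentIn_erase hv hyT
  have hsub : G.componentIn (A.erase v) y ⊆ A \ G.componentIn (A.erase v) x := fun z hz =>
    mem_sdiff.mpr ⟨mem_of_mem_erase (componentIn_subset hz), fun hzx => hyC <| by
      rw [← componentIn_eq_of_mem hzx, componentIn_eq_of_mem hz]
      exact mem_componentIn_self hyT⟩
  exact ((mem_componentIn.mp hu).componentIn.mono hsub).trans
    (huv.reachableIn (hsub hu) hvA)

end SimpleGraph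

section Volume

variable {V : Type*} [Fintype V] {G : SimpleGraph V} [DecidableRel G.Adj] {S T : Finset V}

theorem graphVol_mono (h : S ⊆ T) : graphVol G S ≤ graphVol G T :=
  sum_le_sum_of_subset h

theorem graphVol_le_card_mul_maxDegree (S : Finset V) : graphVol G S ≤ #S * G.maxDegree :=
  sum_le_card_nsmul S _ _ fun v _ => G.degree_le_maxDegree v

theorem degree_le_graphVol {v : V} (hv : v ∈ S) : G.degree v ≤ graphVol G S :=
  single_le_sum (f := fun v => G.degree v) (fun _ _ => Nat.zero_le _) hv

theorem graphVol_univ : graphVol G univ = 2 * #G.edgeFinset :=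
  G.sum_degrees_eq_twice_card_edges

theorem interiorPairs_univ : interiorPairs G univ = graphVol G univ := by
  rw [graphVol_univ, G.two_mul_card_edgeFinset, interiorPairs, univ_product_univ]

variable [DecidableEq V]

theorem graphVol_erase_add {v : V} (hv : v ∈ S) :
    graphVol G (S.erase v) + G.degree v = graphVol G S :=
  sum_erase_add S _ hv

theorem graphVol_biUnion_le {ι : Type*} (s : Finset ι) (t : ι → Finset V) :
    graphVol G (s.biUnion t) ≤ ∑ i ∈ s, graphVol G (t i) := by
  rw [← sup_eq_biUnion]
  refine apply_sup_le_sum (f := graphVol G) sum_empty (fun {a b} => ?_) s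
  rw [sup_eq_union, graphVol, graphVol, graphVol, ← sum_union_inter (s₁ := a)]
  exact le_self_add

theorem interiorPairs_erase_add_two_le {a b : V} (ha : a ∈ S) (hb : b ∈ S) (hab : G.Adj a b) :
    interiorPairs G (S.erase a) + 2 ≤ interiorPairs G S := by
  have hdisj : Disjoint {(a, b), (b, a)}
      ((S.erase a ×ˢ S.erase a).filter fun p => G.Adj p.1 p.2) := by
    simp [disjoint_left]
  have hsub : {(a, b), (b, a)} ∪ ((S.erase a ×ˢ S.erase a).filter fun p => G.Adj p.1 p.2) ⊆
      (S ×ˢ S).filter fun p => G.Adj p.1 p.2 := by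
    intro p hp
    simp only [mem_union, mem_insert, mem_singleton, mem_filter, mem_product, mem_erase] at hp ⊢
    rcases hp with (rfl | rfl) | ⟨⟨⟨-, h1⟩, -, h2⟩, h⟩
    exacts [⟨⟨ha, hb⟩, hab⟩, ⟨⟨hb, ha⟩, hab.symm⟩, ⟨⟨h1, h2⟩, h⟩]
  have hpair : #{(a, b), (b, a)} = 2 := card_pair (by simp [hab.ne])
  have := card_le_card hsub
  rw [card_union_of_disjoint hdisj, hpair] at this
  unfold interiorPairs
  omega

theorem SimpleGraph.ConnectedIn.two_mul_card_le_interiorPairs_add_two (hS : G.ConnectedIn S)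
    (hne : S.Nonempty) : 2 * #S ≤ interiorPairs G S + 2 := by
  induction S using Finset.strongInduction with
  | H S ih =>
    by_cases hcard : #S ≤ 1
    · have := card_pos.mpr hne
      omega
    obtain ⟨v, hv, hSv⟩ := hS.exists_connectedIn_erase (not_le.mp hcard)
    have hne' : (S.erase v).Nonempty := by
      rw [← card_pos, card_erase_of_mem hv]
      omega
    obtain ⟨a, ha, b, hb, hab⟩ :=
      hS.exists_adj_sdiff (erase_subset v S) hne'.choose_spec (y := v) (by simp [hv])
    obtain rfl : b = v := by simpa [sdiff_erase_self hv] using hb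
    have hpairs := interiorPairs_erase_add_two_le hv (mem_of_mem_erase ha) hab.symm
    have := ih _ (erase_ssubset hv) hSv hne'
    have := card_erase_add_one hv
    omega

end Volume

section HeavyPiece

variable {V : Type*} [Fintype V] [DecidableEq V] {G : SimpleGraph V} [DecidableRel G.Adj]
  {S A : Finset V} {ℓ : ℝ}

open SimpleGraph

structure IsHeavyPiece (G : SimpleGraph V) [DecidableRel G.Adj] (ℓ : ℝ) (S A : Finset V) :
    Prop where
  subset : A ⊆ S
  connectedIn : G.ConnectedIn A
  sdiff_nonempty : (S \ A).Nonempty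
  connectedIn_sdiff : G.ConnectedIn (S \ A)
  le_graphVol : ℓ ≤ graphVol G A

theorem IsHeavyPiece.nonempty (hA : IsHeavyPiece G ℓ S A) (hℓ : 0 < ℓ) : A.Nonempty := by
  rw [nonempty_iff_ne_empty]
  rintro rfl
  have := hA.le_graphVol
  simp only [graphVol, sum_empty, Nat.cast_zero] at this
  linarith

theorem SimpleGraph.ConnectedIn.exists_isHeavyPiece (hS : G.ConnectedIn S) (hℓ : 0 < ℓ)
    (hvol : ℓ + G.maxDegree ≤ graphVol G S) : ∃ A, IsHeavyPiece G ℓ S A := by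
  have hcard : 1 < #S := by
    by_contra! h
    have : (graphVol G S : ℝ) ≤ G.maxDegree := by
      exact_mod_cast (graphVol_le_card_mul_maxDegree S).trans
        ((Nat.mul_le_mul_right _ h).trans_eq (one_mul _))
    linarith
  obtain ⟨v, hv, hSv⟩ := hS.exists_connectedIn_erase hcard
  have hvol' : (graphVol G (S.erase v) : ℝ) + G.degree v = graphVol G S := by
    exact_mod_cast graphVol_erase_add hv
  have hdeg : (G.degree v : ℝ) ≤ G.maxDegree := by exact_mod_cast G.degree_le_maxDegree v
  refine ⟨S.erase v, erase_subset v S, hSv, ?_, ?_, by linarith⟩ <;>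
    rw [sdiff_erase_self hv]
  exacts [singleton_nonempty v, connectedIn_singleton v]

theorem IsHeavyPiece.isHeavyPiece_componentIn (hA : IsHeavyPiece G ℓ S A) {v b x : V}
    (hv : v ∈ A) (hb : b ∈ S \ A) (hvb : G.Adj v b)
    (hvol : ℓ ≤ graphVol G (G.componentIn (A.erase v) x)) :
    IsHeavyPiece G ℓ S (G.componentIn (A.erase v) x) := by
  set C := G.componentIn (A.erase v) x
  have hCA : C ⊆ A := componentIn_subset.trans (erase_subset v A)
  have hvC : v ∈ A \ C := mem_sdiff.mpr ⟨hv, fun h => by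
    simpa using componentIn_subset h⟩
  have hSC : S \ C = (A \ C) ∪ (S \ A) := by
    ext z
    simp only [mem_sdiff, mem_union]
    constructor
    · tauto
    · rintro (⟨hzA, hzC⟩ | ⟨hzS, hzA⟩)
      exacts [⟨hA.subset hzA, hzC⟩, ⟨hzS, fun h => hzA (hCA h)⟩]
  refine ⟨hCA.trans hA.subset, connectedIn_componentIn, ?_, ?_, hvol⟩
  · exact ⟨b, hSC ▸ mem_union_right _ hb⟩
  · -- the rest of `A` stays attached to `S \ A` through `v`
    rw [hSC]
    exact (hA.connectedIn.connectedIn_sdiff_componentIn_erase hv).union_of_adj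
      hA.connectedIn_sdiff hvC hb hvb

/-- Each component of `A` minus `v` contains a neighbour of `v`, and `v` has a neighbour
outside `A`. -/
theorem SimpleGraph.ConnectedIn.graphVol_erase_le (hA : G.ConnectedIn A) {v b : V} (hv : v ∈ A)
    (hb : b ∉ A) (hvb : G.Adj v b)
    (hsmall : ∀ u, (graphVol G (G.componentIn (A.erase v) u) : ℝ) ≤ ℓ) :
    (graphVol G (A.erase v) : ℝ) ≤ (G.degree v - 1) * ℓ := by
  set N := (A.erase v).filter (G.Adj v)
  have hcover : A.erase v ⊆ N.biUnion (G.componentIn (A.erase v)) := by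
    intro y hy
    obtain ⟨u, hu, huv⟩ := hA.exists_adj_of_componentIn_erase hv hy
    exact mem_biUnion.mpr ⟨u, mem_filter.mpr ⟨componentIn_subset hu, huv.symm⟩,
      componentIn_eq_of_mem hu ▸ mem_componentIn_self hy⟩
  have hN : #N + 1 ≤ G.degree v := by
    have hbN : b ∉ N := fun h => hb (mem_of_mem_erase (mem_filter.mp h).1)
    rw [← card_neighborFinset_eq_degree, ← card_insert_of_notMem hbN]
    refine card_le_card (insert_subset (by simpa using hvb) fun u hu => ?_)
    simpa using (mem_filter.mp hu).2
  have hN' : (#N : ℝ) ≤ G.degree v - 1 := by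
    have : ((#N + 1 : ℕ) : ℝ) ≤ G.degree v := by exact_mod_cast hN
    push_cast at this
    linarith
  calc (graphVol G (A.erase v) : ℝ)
      ≤ ∑ u ∈ N, (graphVol G (G.componentIn (A.erase v) u) : ℝ) := by
        exact_mod_cast (graphVol_mono hcover).trans (graphVol_biUnion_le _ _)
    _ ≤ ∑ _u ∈ N, ℓ := sum_le_sum fun u _ => hsmall u
    _ = #N * ℓ := by simp
    _ ≤ (G.degree v - 1) * ℓ :=
        mul_le_mul_of_nonneg_right hN' ((Nat.cast_nonneg _).trans (hsmall v))

/-- By minimality, the components of `A` minus a vertex `v` adjacent to `S \ A` are lighter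
than `ℓ`. -/
theorem IsHeavyPiece.graphVol_le_of_minimal (hS : G.ConnectedIn S) (hℓ : 0 < ℓ)
    (hA : IsHeavyPiece G ℓ S A)
    (hmin : ∀ B, IsHeavyPiece G ℓ S B → graphVol G A ≤ graphVol G B) :
    (graphVol G A : ℝ) ≤ G.maxDegree + (G.maxDegree - 1) * ℓ := by
  obtain ⟨x, hx⟩ := hA.nonempty hℓ
  obtain ⟨v, hv, b, hb, hvb⟩ :=
    hS.exists_adj_sdiff hA.subset hx hA.sdiff_nonempty.choose_spec
  have hvolA : graphVol G (A.erase v) + G.degree v = graphVol G A := graphVol_erase_add hv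
  have hdeg : 0 < G.degree v := (G.degree_pos_iff_exists_adj v).mpr ⟨b, hvb⟩
  have hsmall : ∀ u, (graphVol G (G.componentIn (A.erase v) u) : ℝ) ≤ ℓ := by
    intro u
    by_contra! h
    have := hmin _ (hA.isHeavyPiece_componentIn hv hb hvb h.le)
    have := graphVol_mono (G := G) (componentIn_subset (G := G) (T := A.erase v) (x := u))
    omega
  have hvolT := hA.connectedIn.graphVol_erase_le hv (mem_sdiff.mp hb).2 hvb hsmall
  have hdegD : (G.degree v : ℝ) ≤ G.maxDegree := by exact_mod_cast G.degree_le_maxDegree v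
  have hvolA' : (graphVol G (A.erase v) : ℝ) + G.degree v = graphVol G A := by
    exact_mod_cast hvolA
  nlinarith

theorem SimpleGraph.ConnectedIn.exists_isHeavyPiece_graphVol_le (hS : G.ConnectedIn S)
    (hℓ : 0 < ℓ) (hvol : ℓ + G.maxDegree ≤ graphVol G S) :
    ∃ A, IsHeavyPiece G ℓ S A ∧
      (graphVol G A : ℝ) ≤ G.maxDegree + (G.maxDegree - 1) * ℓ := by
  classical
  obtain ⟨A₀, hA₀⟩ := hS.exists_isHeavyPiece hℓ hvol
  obtain ⟨A, hA, hmin⟩ :=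
    exists_min_image (S.powerset.filter (IsHeavyPiece G ℓ S)) (graphVol G)
      ⟨A₀, mem_filter.mpr ⟨mem_powerset.mpr hA₀.subset, hA₀⟩⟩
  have hA' := (mem_filter.mp hA).2
  exact ⟨A, hA', hA'.graphVol_le_of_minimal hS hℓ fun B hB =>
    hmin B (mem_filter.mpr ⟨mem_powerset.mpr hB.subset, hB⟩)⟩

theorem SimpleGraph.ConnectedIn.exists_finpartition (hD : 2 ≤ G.maxDegree) (hℓ : 0 < ℓ)
    (hS : G.ConnectedIn S) (hne : S.Nonempty) :
    ∃ P : Finpartition S,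
      (∀ B ∈ P.parts, G.ConnectedIn B ∧
        (graphVol G B : ℝ) ≤ G.maxDegree + (G.maxDegree - 1) * ℓ) ∧
      (#P.parts : ℝ) * ℓ ≤ graphVol G S + ℓ := by
  induction S using Finset.strongInduction with
  | H S ih =>
    by_cases hvol : ℓ + G.maxDegree ≤ graphVol G S
    · obtain ⟨A, hA, hAvol⟩ := hS.exists_isHeavyPiece_graphVol_le hℓ hvol
      obtain ⟨P, hP, hcard⟩ := ih (S \ A) (sdiff_ssubset hA.subset (hA.nonempty hℓ))
        hA.connectedIn_sdiff hA.sdiff_nonempty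
      refine ⟨P.extend (hA.nonempty hℓ).ne_empty sdiff_disjoint
        (sdiff_union_of_subset hA.subset), fun B hB => ?_, ?_⟩
      · rcases mem_insert.mp hB with rfl | hB
        exacts [⟨hA.connectedIn, hAvol⟩, hP B hB]
      · have hsum : (graphVol G (S \ A) : ℝ) + graphVol G A = graphVol G S := by
          exact_mod_cast sum_sdiff hA.subset
        rw [Finpartition.card_extend]
        push_cast
        linarith [hA.le_graphVol]
    · have hD' : (2 : ℝ) ≤ G.maxDegree := by exact_mod_cast hD
      refine ⟨Finpartition.indiscrete hne.ne_empty, fun B hB => ?_, ?_⟩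
      · obtain rfl : B = S := mem_singleton.mp hB
        exact ⟨hS, by nlinarith⟩
      · simp [Finpartition.indiscrete]

end HeavyPiece

section Modularity

variable {V : Type*} [Fintype V] [DecidableEq V] (G : SimpleGraph V) [DecidableRel G.Adj]

theorem Finpartition.sum_graphVol_parts {S : Finset V} (P : Finpartition S) :
    ∑ B ∈ P.parts, graphVol G B = graphVol G S := by
  conv_rhs => rw [← P.biUnion_parts]
  exact (sum_biUnion P.disjoint).symm

theorem Finpartition.exists_modularity_eq_sum_parts (P : Finpartition (univ : Finset V)) :
    ∃ c : V → V, modularity G c = ∑ B ∈ P.parts,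
      ((interiorPairs G B : ℚ) / graphVol G univ
        - ((graphVol G B : ℚ) / graphVol G univ) ^ 2) := by
  -- `c v` is a point of `P.part v` that depends on `v` only through its part
  let c : V → V := fun v => (P.part_nonempty.mpr (mem_univ v)).choose
  have hc : ∀ v, c v ∈ P.part v := fun v => (P.part_nonempty.mpr (mem_univ v)).choose_spec
  have hpart : ∀ v, P.part (c v) = P.part v := fun v =>
    P.part_eq_of_mem (P.part_mem.mpr (mem_univ v)) (hc v)
  have hc_eq : ∀ u v, c u = c v ↔ P.part u = P.part v := by
    refine fun u v => ⟨fun h => by rw [← hpart u, h, hpart], fun h => ?_⟩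
    have key : ∀ (B B' : Finset V) (hB : B.Nonempty) (hB' : B'.Nonempty), B = B' →
        hB.choose = hB'.choose := by
      rintro B _ hB hB' rfl
      rfl
    exact key _ _ _ _ h
  have hfiber : ∀ v, univ.filter (fun u => c u = c v) = P.part v := by
    intro v
    ext u
    simp [hc_eq, P.mem_part_iff_part_eq_part (mem_univ u) (mem_univ v)]
  set f : Finset V → ℚ := fun A =>
    (interiorPairs G A : ℚ) / graphVol G univ - ((graphVol G A : ℚ) / graphVol G univ) ^ 2
  refine ⟨c, ?_⟩
  calc modularity G c = ∑ i, f (univ.filter fun v => c v = i) := rfl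
    _ = ∑ i ∈ univ.image c, f (univ.filter fun v => c v = i) := by
      refine (sum_subset (subset_univ _) fun i _ hi => ?_).symm
      rw [filter_false_of_mem fun v _ (h : c v = i) =>
        hi (h ▸ mem_image_of_mem c (mem_univ v))]
      simp [f, interiorPairs, graphVol]
    _ = ∑ B ∈ P.parts, f B := by
      refine sum_nbij P.part (fun i _ => P.part_mem.mpr (mem_univ i)) ?_ ?_ ?_
      · intro _ hu _ hv h
        obtain ⟨u, -, rfl⟩ := mem_image.mp hu
        obtain ⟨v, -, rfl⟩ := mem_image.mp hv
        exact (hc_eq u v).mpr (by rwa [hpart, hpart] at h)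
      · intro B hB
        obtain ⟨b, hb⟩ := P.nonempty_of_mem_parts hB
        exact ⟨c b, by simp, by rw [hpart, P.part_eq_of_mem hB hb]⟩
      · rintro _ hi
        obtain ⟨v, -, rfl⟩ := mem_image.mp hi
        rw [hfiber, hpart]

theorem Finpartition.exists_modularity_ge (P : Finpartition (univ : Finset V))
    (hP : ∀ B ∈ P.parts, G.ConnectedIn B) {M : ℝ}
    (hM : ∀ B ∈ P.parts, (graphVol G B : ℝ) ≤ M)
    (hvol : 0 < graphVol G univ) :
    ∃ c : V → V, (2 * Fintype.card V - 2 * #P.parts - M) / graphVol G univ ≤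
      ((modularity G c : ℚ) : ℝ) := by
  obtain ⟨c, hc⟩ := P.exists_modularity_eq_sum_parts G
  refine ⟨c, ?_⟩
  have hvolR : (0 : ℝ) < graphVol G univ := by exact_mod_cast hvol
  have hvolsum : ∑ B ∈ P.parts, (graphVol G B : ℝ) = graphVol G univ := by
    exact_mod_cast P.sum_graphVol_parts G
  have hcard : ∑ B ∈ P.parts, (#B : ℝ) = Fintype.card V := by
    exact_mod_cast P.sum_card_parts
  have hedges :
      2 * (Fintype.card V : ℝ) - 2 * #P.parts ≤ ∑ B ∈ P.parts, (interiorPairs G B : ℝ) :=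
    calc _ = ∑ B ∈ P.parts, (2 * (#B : ℝ) - 2) := by
          rw [sum_sub_distrib, ← mul_sum, hcard]
          simp [mul_comm]
      _ ≤ _ := sum_le_sum fun B hB => by
          have := (hP B hB).two_mul_card_le_interiorPairs_add_two (P.nonempty_of_mem_parts hB)
          linarith [show (2 * #B : ℝ) ≤ interiorPairs G B + 2 by exact_mod_cast this]
  have htax : ∑ B ∈ P.parts, (graphVol G B : ℝ) ^ 2 ≤ M * graphVol G univ :=
    calc _ ≤ ∑ B ∈ P.parts, M * graphVol G B := sum_le_sum fun B hB => by
          rw [sq]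
          exact mul_le_mul_of_nonneg_right (hM B hB) (Nat.cast_nonneg _)
      _ = M * graphVol G univ := by rw [← mul_sum, hvolsum]
  rw [hc]
  push_cast
  rw [sum_sub_distrib, ← sum_div]
  simp_rw [div_pow]
  rw [← sum_div, sub_div]
  have h1 := div_le_div_of_nonneg_right hedges hvolR.le
  have h2 : (∑ B ∈ P.parts, (graphVol G B : ℝ) ^ 2) / (graphVol G univ : ℝ) ^ 2 ≤
      M / graphVol G univ := by
    rw [div_le_div_iff₀ (by positivity) hvolR]
    nlinarith
  linarith

end Modularity

noncomputable def modularityBound (n Δ vol : ℝ) : ℝ :=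
  2 * n / vol - 3 * √(Δ / vol) - Δ / vol

theorem modularityBound_le_of_two_le_sqrt {n k Δ vol : ℝ} (hvol : 0 < vol) (hΔ : 0 < Δ)
    (hℓ : 2 ≤ √(vol / Δ)) (hk : k * √(vol / Δ) ≤ vol + √(vol / Δ)) :
    modularityBound n Δ vol ≤ (2 * n - 2 * k - (Δ + (Δ - 1) * √(vol / Δ))) / vol := by
  set ℓ := √(vol / Δ)
  have hvolℓ : vol = Δ * ℓ ^ 2 := by
    rw [Real.sq_sqrt (by positivity)]
    field_simp
  have hs : √(Δ / vol) = ℓ⁻¹ := by rw [← Real.sqrt_inv, inv_div]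
  have hk' : k ≤ Δ * ℓ + 1 := by nlinarith
  have hsplit : (2 * n - 2 * k - (Δ + (Δ - 1) * ℓ)) / vol =
      modularityBound n Δ vol + (2 * Δ * ℓ + ℓ - 2 * k) / vol := by
    rw [modularityBound, hs, hvolℓ]
    field_simp
    ring
  rw [hsplit, le_add_iff_nonneg_right]
  exact div_nonneg (by nlinarith) hvol.le

theorem modularityBound_le_of_lt_four_mul {n Δ vol : ℝ} (hvol : 0 < vol) (hΔ : 1 ≤ Δ)
    (hΔvol : Δ ≤ vol) (h4 : vol < 4 * Δ) :
    modularityBound n Δ vol ≤ (2 * n - 2 - vol) / vol := by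
  set s := √(Δ / vol)
  have hs2 : s ^ 2 = Δ / vol := Real.sq_sqrt (by positivity)
  have hs1 : s ≤ 1 := Real.sqrt_le_one.mpr ((div_le_one hvol).mpr hΔvol)
  have hs0 : 1 / 4 < s ^ 2 := by rw [hs2, lt_div_iff₀ hvol]; linarith
  have hinv : 1 / vol ≤ s ^ 2 := by rw [hs2]; gcongr
  have hsplit : (2 * n - 2 - vol) / vol = 2 * n / vol - 2 * (1 / vol) - 1 := by
    field_simp
  have hs_half : 1 / 2 < s := by nlinarith [Real.sqrt_nonneg (Δ / vol)]
  rw [modularityBound, hsplit]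
  nlinarith

section Cases

variable {V : Type*} [Fintype V] [DecidableEq V] {G : SimpleGraph V} [DecidableRel G.Adj]

theorem SimpleGraph.ConnectedIn.exists_modularityBound_le_of_four_mul_le
    (hS : G.ConnectedIn univ) (hne : (univ : Finset V).Nonempty) (hΔ : 2 ≤ G.maxDegree)
    (h4 : 4 * G.maxDegree ≤ graphVol G univ) :
    ∃ c : V → V, modularityBound (Fintype.card V) G.maxDegree (graphVol G univ) ≤
      ((modularity G c : ℚ) : ℝ) := by
  have hvol : 0 < graphVol G univ := by omega
  have hℓ : 2 ≤ √(graphVol G univ / G.maxDegree : ℝ) := by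
    rw [Real.le_sqrt (by norm_num) (by positivity), le_div_iff₀ (by positivity)]
    exact_mod_cast h4
  obtain ⟨P, hP, hcard⟩ := hS.exists_finpartition hΔ (by linarith) hne
  obtain ⟨c, hc⟩ :=
    P.exists_modularity_ge G (fun B hB => (hP B hB).1) (fun B hB => (hP B hB).2) hvol
  have hvolR : (0 : ℝ) < graphVol G univ := by exact_mod_cast hvol
  exact ⟨c, (modularityBound_le_of_two_le_sqrt hvolR (by positivity) hℓ hcard).trans hc⟩

theorem SimpleGraph.ConnectedIn.exists_modularityBound_le_of_lt_four_mul
    (hS : G.ConnectedIn univ) (hne : (univ : Finset V).Nonempty) (hvol : 0 < graphVol G univ)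
    (h4 : graphVol G univ < 4 * G.maxDegree) :
    ∃ c : V → V, modularityBound (Fintype.card V) G.maxDegree (graphVol G univ) ≤
      ((modularity G c : ℚ) : ℝ) := by
  obtain ⟨c, hc⟩ := (Finpartition.indiscrete hne.ne_empty).exists_modularity_ge G
    (by simpa [Finpartition.indiscrete] using hS) (M := graphVol G univ)
    (by simp [Finpartition.indiscrete]) hvol
  have hΔ : 0 < G.maxDegree :=
    Nat.pos_of_mul_pos_left (hvol.trans_le (graphVol_le_card_mul_maxDegree univ))
  have hΔvol : G.maxDegree ≤ graphVol G univ :=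
    G.maxDegree_le_of_forall_degree_le _ fun v => degree_le_graphVol (mem_univ v)
  refine ⟨c, (modularityBound_le_of_lt_four_mul (by positivity) ?_ ?_ ?_).trans ?_⟩
  · exact_mod_cast hΔ
  · exact_mod_cast hΔvol
  · exact_mod_cast h4
  · simpa [Finpartition.indiscrete] using hc

end Cases

theorem spanning_tree_modularity_bound_general {V : Type*} [Fintype V] [DecidableEq V]
    (G : SimpleGraph V) [DecidableRel G.Adj]
    (hconn : G.Connected) (hE : 0 < G.edgeFinset.card) :
    ∃ c : V → V,
      2 * (Fintype.card V : ℝ) / (graphVol G univ)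
          - 3 * Real.sqrt ((G.maxDegree : ℝ) / (graphVol G univ))
          - (G.maxDegree : ℝ) / (graphVol G univ)
        ≤ ((modularity G c : ℚ) : ℝ) := by
  have hS := hconn.connectedIn_univ
  have hne : (univ : Finset V).Nonempty := univ_nonempty_iff.mpr hconn.nonempty
  have hvol : 0 < graphVol G univ := by rw [graphVol_univ]; omega
  by_cases h4 : 4 * G.maxDegree ≤ graphVol G univ
  · have htree : 2 * #(univ : Finset V) ≤ graphVol G univ + 2 := by
      simpa [interiorPairs_univ] using hS.two_mul_card_le_interiorPairs_add_two hne
    have hvolΔ := graphVol_le_card_mul_maxDegree (G := G) univ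
    have hΔ : 2 ≤ G.maxDegree := by
      by_contra! h
      interval_cases G.maxDegree <;> omega
    exact hS.exists_modularityBound_le_of_four_mul_le hne hΔ h4
  · exact hS.exists_modularityBound_le_of_lt_four_mul hne hvol (not_le.mp h4)

/-- for a connected graph `G` on `n` vertices with maximum degree `Δ` and
volume `vol(V) = 2|E|`, there exists a partition `C` (given as the fibers of a coloring)
with `q(C) ≥ 2n/vol(V) − 3√(Δ/vol(V)) − Δ/vol(V)`; in particular `q*(G)` is at least this
bound. -/
theorem spanning_tree_modularity_bound {V : Type*} [Fintype V] [DecidableEq V] [Nonempty V]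
    (G : SimpleGraph V) [DecidableRel G.Adj]
    (hconn : G.Connected) (hE : 0 < G.edgeFinset.card) :
    ∃ c : V → V,
      2 * (Fintype.card V : ℝ) / (graphVol G univ)
          - 3 * Real.sqrt ((G.maxDegree : ℝ) / (graphVol G univ))
          - (G.maxDegree : ℝ) / (graphVol G univ)
        ≤ ((modularity G c : ℚ) : ℝ) :=
  spanning_tree_modularity_bound_general G hconn hE
end
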